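/- arXiv:1708.05082 — 4 statements merged into one kernel-verified Lean document; each statement's English description precedes it below -/
import Mathlib

section
/- Let A, B ≥ 0 be real numbers with A + δ/3·B > 0 (so denominators below are positive), let δ > 0, and set K = (3/(3+δ))A + (δ/(3+δ))B. Then for all t ∈ [0,1], 3A/((1-t)A + tK) + δB/((1-t)B + tK) ≤ 3 + δ, where each fraction is interpreted with the convention that if its denominator is 0 then A (resp. B) is 0 and the term is 0. -/
/-!
Write `D₁ = (1 - t) A + t K` and `D₂ = (1 - t) B + t K` with `K = (α A + β B) / (α + β)`.
Clearing denominators, the inequality `α A / D₁ + β B / D₂ ≤ α + β` becomes the identity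
`(α + β) D₁ D₂ - (α A D₂ + β B D₁) = α β t (1 - t) (A - B)² / (α + β) ≥ 0`.
For `t > 0` both denominators are at least `t K > 0`; at `t = 0` the sum is
`α (A / A) + β (B / B)`, which is at most `α + β` even when `A` or `B` vanishes.
-/

namespace ConvexityLemma

theorem weighted_mean_defect (α β A B t : ℝ) (hαβ : α + β ≠ 0) :
    let K := (α * A + β * B) / (α + β)
    (α + β) * (((1 - t) * A + t * K) * ((1 - t) * B + t * K))
        - (α * A * ((1 - t) * B + t * K) + β * B * ((1 - t) * A + t * K))
      = α * β * t * (1 - t) * (A - B) ^ 2 / (α + β) := by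
  intro K
  simp only [K]
  field_simp
  ring

theorem mul_div_self_add_mul_div_self_le {α β : ℝ} (hα : 0 ≤ α) (hβ : 0 ≤ β) (A B : ℝ) :
    α * A / A + β * B / B ≤ α + β := by
  rw [mul_div_assoc, mul_div_assoc]
  gcongr
  · exact mul_le_of_le_one_right hα (div_self_le_one A)
  · exact mul_le_of_le_one_right hβ (div_self_le_one B)

theorem convex_combination_pos {A K t : ℝ} (hA : 0 ≤ A) (hK : 0 < K) (ht₀ : 0 < t)
    (ht₁ : t ≤ 1) : 0 < (1 - t) * A + t * K := by
  have : 0 ≤ (1 - t) * A := mul_nonneg (by linarith) hA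
  have : 0 < t * K := mul_pos ht₀ hK
  linarith

theorem weighted_div_add_div_le {α β A B : ℝ} (hα : 0 ≤ α) (hβ : 0 ≤ β) (hA : 0 ≤ A)
    (hB : 0 ≤ B) (hpos : 0 < α * A + β * B) {t : ℝ} (ht : t ∈ Set.Icc (0 : ℝ) 1) :
    let K := (α * A + β * B) / (α + β)
    α * A / ((1 - t) * A + t * K) + β * B / ((1 - t) * B + t * K) ≤ α + β := by
  intro K
  obtain ⟨ht₀, ht₁⟩ := ht
  rcases ht₀.eq_or_lt with rfl | ht₀
  · simpa using mul_div_self_add_mul_div_self_le hα hβ A B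
  have hαβ : 0 < α + β := by
    by_contra! h
    have hα0 : α = 0 := by linarith
    have hβ0 : β = 0 := by linarith
    simp [hα0, hβ0] at hpos
  have hK : 0 < K := div_pos hpos hαβ
  have hD₁ := convex_combination_pos hA hK ht₀ ht₁
  have hD₂ := convex_combination_pos hB hK ht₀ ht₁
  have hdefect : 0 ≤ α * β * t * (1 - t) * (A - B) ^ 2 / (α + β) := by
    have : 0 ≤ 1 - t := by linarith
    positivity
  rw [div_add_div _ _ hD₁.ne' hD₂.ne', div_le_iff₀ (mul_pos hD₁ hD₂)]
  have := weighted_mean_defect α β A B t hαβ.ne'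
  linarith

end ConvexityLemma

theorem convexity_lemma_nonneg (A B δ : ℝ) (hA : 0 ≤ A) (hB : 0 ≤ B)
    (hpos : 0 < A + δ / 3 * B) (hδ : 0 < δ)
    (K : ℝ) (hK : K = 3 / (3 + δ) * A + δ / (3 + δ) * B)
    (t : ℝ) (ht : t ∈ Set.Icc (0 : ℝ) 1) :
    3 * A / ((1 - t) * A + t * K) + δ * B / ((1 - t) * B + t * K) ≤ 3 + δ := by
  have hK' : K = (3 * A + δ * B) / (3 + δ) := by rw [hK]; ring
  subst hK'
  exact ConvexityLemma.weighted_div_add_div_le (by norm_num) hδ.le hA hB (by linarith) ht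
end

section
/- Let Θ₁, Θ₂, Θ₃ > 0, T_tr = (Θ₁+Θ₂+Θ₃)/3, let 0 < ν < 1, 0 ≤ θ < 1, T_δ > 0, and set A_i = (1-θ)((1-ν)T_tr + νΘ_i) + θT_δ for i = 1,2,3. Then Θ₁/A₁ + Θ₂/A₂ + Θ₃/A₃ ≤ 3T_tr/((1-θ)T_tr + θT_δ). -/
/-!
Writing `B = (1-θ)(1-ν)Ttr + θTδ > 0` and `c = (1-θ)ν > 0`, each `A_i = B + cΘ_i`, and the
right-hand denominator is `B + c·Ttr`. The map `t ↦ t / (B + ct)` is concave on `B + ct > 0`, so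
the bound is Jensen's inequality at the mean `Ttr` of the `Θ_i`; it is proved by summing the
tangent-line inequalities at the mean, whose linear parts cancel.
-/

open Finset

lemma div_add_mul_le_tangent {B c x m : ℝ} (hBc : 0 ≤ B * c) (hx : 0 < B + c * x)
    (hm : B + c * m ≠ 0) :
    x / (B + c * x) ≤ m / (B + c * m) + B * (x - m) / (B + c * m) ^ 2 := by
  have gap : m / (B + c * m) + B * (x - m) / (B + c * m) ^ 2 - x / (B + c * x)
      = B * c * (x - m) ^ 2 / ((B + c * m) ^ 2 * (B + c * x)) := by
    rw [div_add_div _ _ hm (pow_ne_zero 2 hm), div_sub_div _ _ (by positivity) hx.ne',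
      div_eq_div_iff (by positivity) (by positivity)]
    ring
  have : 0 ≤ B * c * (x - m) ^ 2 / ((B + c * m) ^ 2 * (B + c * x)) := by positivity
  linarith

lemma sum_div_add_mul_le_card_mul {ι : Type*} (s : Finset ι) (x : ι → ℝ) {B c : ℝ}
    (hBc : 0 ≤ B * c) (hx : ∀ i ∈ s, 0 < B + c * x i)
    (hm : B + c * ((∑ i ∈ s, x i) / #s) ≠ 0) :
    ∑ i ∈ s, x i / (B + c * x i)
      ≤ #s * ((∑ i ∈ s, x i) / #s / (B + c * ((∑ i ∈ s, x i) / #s))) := by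
  set m := (∑ i ∈ s, x i) / #s
  have deviations : ∑ i ∈ s, (x i - m) = 0 := by
    rcases s.eq_empty_or_nonempty with rfl | hs
    · simp
    · rw [sum_sub_distrib, sum_const, nsmul_eq_mul, mul_div_cancel₀ _ (by simpa using hs.ne_empty),
        sub_self]
  calc ∑ i ∈ s, x i / (B + c * x i)
      ≤ ∑ i ∈ s, (m / (B + c * m) + B * (x i - m) / (B + c * m) ^ 2) :=
        sum_le_sum fun i hi => div_add_mul_le_tangent hBc (hx i hi) hm
    _ = #s * (m / (B + c * m)) := by
        rw [sum_add_distrib, sum_const, nsmul_eq_mul, ← sum_div, ← mul_sum, deviations, mul_zero,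
          zero_div, add_zero]

theorem F_theta_bound (Θ₁ Θ₂ Θ₃ : ℝ) (h1 : 0 < Θ₁) (h2 : 0 < Θ₂) (h3 : 0 < Θ₃)
    (Ttr : ℝ) (hTtr : Ttr = (Θ₁ + Θ₂ + Θ₃) / 3)
    (ν θ Tδ : ℝ) (hν : 0 < ν) (hν1 : ν < 1) (hθ : 0 ≤ θ) (hθ1 : θ < 1) (hTδ : 0 < Tδ)
    (A₁ A₂ A₃ : ℝ)
    (hA1 : A₁ = (1 - θ) * ((1 - ν) * Ttr + ν * Θ₁) + θ * Tδ)
    (hA2 : A₂ = (1 - θ) * ((1 - ν) * Ttr + ν * Θ₂) + θ * Tδ)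
    (hA3 : A₃ = (1 - θ) * ((1 - ν) * Ttr + ν * Θ₃) + θ * Tδ) :
    Θ₁ / A₁ + Θ₂ / A₂ + Θ₃ / A₃ ≤ 3 * Ttr / ((1 - θ) * Ttr + θ * Tδ) := by
  set B := (1 - θ) * (1 - ν) * Ttr + θ * Tδ
  set c := (1 - θ) * ν
  have hA : ∀ t, (1 - θ) * ((1 - ν) * Ttr + ν * t) + θ * Tδ = B + c * t := fun _ => by ring
  have hT : 0 < Ttr := by rw [hTtr]; positivity
  have hB : 0 < B := by
    have := mul_pos (mul_pos (sub_pos.2 hθ1) (sub_pos.2 hν1)) hT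
    have := mul_nonneg hθ hTδ.le
    linarith
  have hc : 0 < c := mul_pos (sub_pos.2 hθ1) hν
  have hpos : ∀ t, 0 < t → 0 < B + c * t := fun t ht => by positivity
  have hmean : (∑ i, ![Θ₁, Θ₂, Θ₃] i) / #(univ : Finset (Fin 3)) = Ttr := by
    simp [Fin.sum_univ_three, hTtr]
  have jensen := sum_div_add_mul_le_card_mul univ ![Θ₁, Θ₂, Θ₃] (mul_pos hB hc).le
    (by simp [Fin.forall_fin_succ, hpos, h1, h2, h3]) (by rw [hmean]; exact (hpos _ hT).ne')
  rw [hmean] at jensen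
  simp only [Fin.sum_univ_three, Fin.isValue, Matrix.cons_val_zero, Matrix.cons_val_one,
    Matrix.cons_val, card_univ, Fintype.card_fin] at jensen
  rw [hA1, hA2, hA3, hA, hA, hA, show (1 - θ) * Ttr + θ * Tδ = B + c * Ttr by ring, mul_div_assoc]
  exact jensen
end

section
/- Let Θ₁, Θ₂, Θ₃ > 0, T_tr = (Θ₁+Θ₂+Θ₃)/3, T_{I,δ} > 0, δ > 0, and define T_δ = (3T_tr + δT_{I,δ})/(3+δ). Let 0 < ν < 1, 0 < θ ≤ 1 (with θ < 1 so all denominators are positive, or θ = 1 where A_i = T_δ), set A_i = (1-θ)((1-ν)T_tr + νΘ_i) + θT_δ and T_θ = (1-θ)T_{I,δ} + θT_δ. Then Θ₁/A₁ + Θ₂/A₂ + Θ₃/A₃ + δT_{I,δ}/T_θ ≤ 3 + δ. -/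
/-!
For `c * B ≥ 0` the map `x ↦ x / (c * x + B)` is concave where its denominator is positive, so it
lies below its tangent lines. Writing `Aᵢ = c Θᵢ + B` with `c = (1 - θ) ν`, the tangent at `T_tr`
bounds `∑ Θᵢ / Aᵢ` by `3 T_tr / ((1 - θ) T_tr + θ T_δ)`, the linear terms cancelling because `T_tr`
is the mean of the `Θᵢ`. The tangent at `T_δ` of `u ↦ u / ((1 - θ) u + θ T_δ)`, with weights `3`
and `δ`, finishes the proof, since by equipartition `T_δ` is the weighted mean of `T_tr` and
`T_{I,δ}`.
-/

open Finset

theorem div_affine_le_tangent {c B x p : ℝ} (hcB : 0 ≤ c * B) (hx : 0 < c * x + B)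
    (hp : 0 < c * p + B) :
    x / (c * x + B) ≤ p / (c * p + B) + B * (x - p) / (c * p + B) ^ 2 := by
  have gap : p / (c * p + B) + B * (x - p) / (c * p + B) ^ 2 - x / (c * x + B)
      = c * B * (x - p) ^ 2 / ((c * x + B) * (c * p + B) ^ 2) := by
    rw [div_add_div _ _ hp.ne' (by positivity), div_sub_div _ _ (by positivity) hx.ne',
      div_eq_div_iff (by positivity) (by positivity)]
    ring
  have : 0 ≤ c * B * (x - p) ^ 2 / ((c * x + B) * (c * p + B) ^ 2) := by positivity
  linarith

theorem sum_mul_div_affine_le_of_mean {ι : Type*} (s : Finset ι) (w x : ι → ℝ) {c B p : ℝ}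
    (hcB : 0 ≤ c * B) (hw : ∀ i ∈ s, 0 ≤ w i) (hx : ∀ i ∈ s, 0 < c * x i + B)
    (hp : 0 < c * p + B) (hmean : ∑ i ∈ s, w i * x i = (∑ i ∈ s, w i) * p) :
    ∑ i ∈ s, w i * (x i / (c * x i + B)) ≤ (∑ i ∈ s, w i) * (p / (c * p + B)) := by
  set q := c * p + B
  calc ∑ i ∈ s, w i * (x i / (c * x i + B))
      ≤ ∑ i ∈ s, w i * (p / q + B * (x i - p) / q ^ 2) :=
        sum_le_sum fun i hi =>
          mul_le_mul_of_nonneg_left (div_affine_le_tangent hcB (hx i hi) hp) (hw i hi)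
    _ = (∑ i ∈ s, w i) * (p / q) + B / q ^ 2 * (∑ i ∈ s, w i * x i - (∑ i ∈ s, w i) * p) := by
        rw [sum_mul, sum_mul, ← sum_sub_distrib, mul_sum, ← sum_add_distrib]
        exact sum_congr rfl fun i _ => by ring
    _ = (∑ i ∈ s, w i) * (p / q) := by rw [hmean, sub_self, mul_zero, add_zero]

theorem key_remainder_ineq (Θ₁ Θ₂ Θ₃ : ℝ) (h1 : 0 < Θ₁) (h2 : 0 < Θ₂) (h3 : 0 < Θ₃)
    (Ttr : ℝ) (hTtr : Ttr = (Θ₁ + Θ₂ + Θ₃) / 3)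
    (TIδ δ : ℝ) (hTIδ : 0 < TIδ) (hδ : 0 < δ)
    (Tδ : ℝ) (hTδ : Tδ = (3 * Ttr + δ * TIδ) / (3 + δ))
    (ν θ : ℝ) (hν : 0 < ν) (hν1 : ν < 1) (hθ : 0 < θ) (hθ1 : θ ≤ 1)
    (A₁ A₂ A₃ Tθ : ℝ)
    (hA1 : A₁ = (1 - θ) * ((1 - ν) * Ttr + ν * Θ₁) + θ * Tδ)
    (hA2 : A₂ = (1 - θ) * ((1 - ν) * Ttr + ν * Θ₂) + θ * Tδ)
    (hA3 : A₃ = (1 - θ) * ((1 - ν) * Ttr + ν * Θ₃) + θ * Tδ)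
    (hTθ : Tθ = (1 - θ) * TIδ + θ * Tδ) :
    Θ₁ / A₁ + Θ₂ / A₂ + Θ₃ / A₃ + δ * TIδ / Tθ ≤ 3 + δ := by
  have hθ' : 0 ≤ 1 - θ := by linarith
  have hTtr0 : 0 < Ttr := by rw [hTtr]; positivity
  have hTδ0 : 0 < Tδ := by rw [hTδ]; positivity
  have hmeanδ : 3 * Ttr + δ * TIδ = (3 + δ) * Tδ := by rw [hTδ]; field_simp
  have hden {u : ℝ} (hu : 0 < u) : 0 < (1 - θ) * u + θ * Tδ :=
    add_pos_of_nonneg_of_pos (mul_nonneg hθ' hu.le) (mul_pos hθ hTδ0)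
  set c := (1 - θ) * ν
  set B := (1 - θ) * ((1 - ν) * Ttr) + θ * Tδ
  have hc : 0 ≤ c := mul_nonneg hθ' hν.le
  have hB : 0 < B := hden (mul_pos (sub_pos.2 hν1) hTtr0)
  have hpos {x : ℝ} (hx : 0 < x) : 0 < c * x + B :=
    add_pos_of_nonneg_of_pos (mul_nonneg hc hx.le) hB
  have hA {x : ℝ} : (1 - θ) * ((1 - ν) * Ttr + ν * x) + θ * Tδ = c * x + B := by ring
  have translational : Θ₁ / A₁ + Θ₂ / A₂ + Θ₃ / A₃ ≤ 3 * (Ttr / ((1 - θ) * Ttr + θ * Tδ)) := by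
    have := sum_mul_div_affine_le_of_mean univ 1 ![Θ₁, Θ₂, Θ₃] (c := c) (B := B) (p := Ttr)
      (mul_nonneg hc hB.le) (by simp) (fun i _ => by fin_cases i <;> simp [hpos, h1, h2, h3])
      (hpos hTtr0)
      (by simp only [Fin.sum_univ_three, Pi.one_apply, one_mul, Matrix.cons_val_zero,
        Matrix.cons_val_one, Matrix.cons_val_two, Matrix.tail_cons, Matrix.head_cons, hTtr]; ring)
    simpa [Fin.sum_univ_three, hA1, hA2, hA3, hA, ← add_assoc, show c * Ttr + B =
      (1 - θ) * Ttr + θ * Tδ by ring] using this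
  have equipartition := sum_mul_div_affine_le_of_mean univ ![3, δ] ![Ttr, TIδ] (c := 1 - θ)
    (B := θ * Tδ) (p := Tδ) (mul_nonneg hθ' (mul_pos hθ hTδ0).le)
    (fun i _ => by fin_cases i <;> simp [hδ.le])
    (fun i _ => by fin_cases i <;> simp [hden, hTtr0, hTIδ]) (hden hTδ0)
    (by simpa [Fin.sum_univ_two] using hmeanδ)
  have hTδ1 : Tδ / ((1 - θ) * Tδ + θ * Tδ) = 1 := by rw [← add_mul]; simp [hTδ0.ne']
  simp only [Fin.sum_univ_two, Matrix.cons_val_zero, Matrix.cons_val_one, hTδ1, ← hTθ]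
    at equipartition
  rw [mul_div_assoc]
  linarith
end

section
/- Let δ > 0 and let 0 < t < 1, A, B > 0 with A ≠ B, K = (3A + δB)/(3+δ). Then the function F(t) = 3A/((1-t)A + tK) + δB/((1-t)B + tK) satisfies F(t) < 3 + δ for all t ∈ (0,1). -/
/-! Since `x ↦ x⁻¹` is strictly convex, `a / ((1 - t) a + t K) < (1 - t) + t (a / K)` whenever
`a ≠ K`. Weighting these bounds by `p` and `q` and adding, the terms `t (p a + q b) / K` collapse
to `t (p + q)` because `K` is the `(p, q)`-weighted mean of `a` and `b`, which differs from both. -/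

open Set

theorem inv_lineMap_lt {x y t : ℝ} (hx : 0 < x) (hy : 0 < y) (hxy : x ≠ y) (ht : t ∈ Ioo (0 : ℝ) 1) :
    ((1 - t) * x + t * y)⁻¹ < (1 - t) * x⁻¹ + t * y⁻¹ := by
  have := (strictConvexOn_zpow (m := -1) (by norm_num) (by norm_num)).2 hx hy hxy
    (sub_pos.2 ht.2) ht.1 (sub_add_cancel 1 t)
  simpa only [zpow_neg_one, smul_eq_mul] using this

theorem div_lineMap_self_lt {x y t : ℝ} (hx : 0 < x) (hy : 0 < y) (hxy : x ≠ y)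
    (ht : t ∈ Ioo (0 : ℝ) 1) :
    x / ((1 - t) * x + t * y) < 1 - t + t * (x / y) := by
  calc x / ((1 - t) * x + t * y) = x * ((1 - t) * x + t * y)⁻¹ := div_eq_mul_inv _ _
    _ < x * ((1 - t) * x⁻¹ + t * y⁻¹) := mul_lt_mul_of_pos_left (inv_lineMap_lt hx hy hxy ht) hx
    _ = 1 - t + t * (x / y) := by field_simp

theorem weighted_div_lineMap_mean_lt {p q a b t : ℝ} (hp : 0 < p) (hq : 0 < q) (ha : 0 < a)
    (hb : 0 < b) (hab : a ≠ b) {K : ℝ} (hK : K = (p * a + q * b) / (p + q))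
    (ht : t ∈ Ioo (0 : ℝ) 1) :
    p * a / ((1 - t) * a + t * K) + q * b / ((1 - t) * b + t * K) < p + q := by
  have hsum : (p + q) * K = p * a + q * b := by rw [hK, mul_div_cancel₀ _ (add_pos hp hq).ne']
  have hKpos : 0 < K := by rw [hK]; positivity
  have haK : a ≠ K := by
    rintro rfl
    exact hab (mul_left_cancel₀ hq.ne' (by linarith))
  have hbK : b ≠ K := by
    rintro rfl
    exact hab (mul_left_cancel₀ hp.ne' (by linarith))
  calc p * a / ((1 - t) * a + t * K) + q * b / ((1 - t) * b + t * K)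
      = p * (a / ((1 - t) * a + t * K)) + q * (b / ((1 - t) * b + t * K)) := by
        simp only [mul_div_assoc]
    _ < p * (1 - t + t * (a / K)) + q * (1 - t + t * (b / K)) := by
        gcongr
        · exact div_lineMap_self_lt ha hKpos haK ht
        · exact div_lineMap_self_lt hb hKpos hbK ht
    _ = (p + q) * (1 - t) + t * ((p * a + q * b) / K) := by ring
    _ = p + q := by rw [← hsum, mul_div_cancel_right₀ _ hKpos.ne']; ring

theorem strict_convexity_lemma (A B δ : ℝ) (hA : 0 < A) (hB : 0 < B) (hδ : 0 < δ)
    (hAB : A ≠ B) (K : ℝ) (hK : K = (3 * A + δ * B) / (3 + δ))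
    (t : ℝ) (ht : t ∈ Set.Ioo (0 : ℝ) 1) :
    3 * A / ((1 - t) * A + t * K) + δ * B / ((1 - t) * B + t * K) < 3 + δ :=
  weighted_div_lineMap_mean_lt three_pos hδ hA hB hAB hK ht
end
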